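/- arXiv:2303.17754 — 3 statements merged into one kernel-verified Lean document; each statement's English description precedes it below -/
import Mathlib

section
/- Let S be a subring of a ring R that is separable over C(R)^β (a subring of the center of R) and contains C(R)^β. Then the subring S·C(R) generated by S and the center C(R) is separable over C(R). -/
set_option maxHeartbeats 1000000


open TensorProduct

/-- A ring extension `A ⊇ k` (with `k` commutative, mapping centrally into `A`)
is separable if there is a separability element `z ∈ A ⊗_k A` with
`μ(z) = 1` and `(a ⊗ 1) z = z (1 ⊗ a)` for all `a ∈ A`. -/
def IsSepExt (k A : Type) [CommRing k] [Ring A] [Algebra k A] : Prop :=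
  ∃ z : A ⊗[k] A,
    LinearMap.mul' k A z = 1 ∧
    ∀ a : A, ((a ⊗ₜ[k] (1 : A)) * z = z * ((1 : A) ⊗ₜ[k] a))

/-- A subring of a ring consisting of central elements is commutative. -/
def commRingOfCentral (R : Type) [Ring R] (k : Subring R)
    (h : ∀ x ∈ k, ∀ r : R, x * r = r * x) : CommRing k :=
  { (inferInstance : Ring k) with
    mul_comm := fun a b => Subtype.ext (h a.1 a.2 b.1) }

/-- `T` is a separable extension of `k`, for subrings `k ≤ T` of `R` with `k`
central in `R`. -/
def SepOver (R : Type) [Ring R] (k T : Subring R) : Prop :=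
  ∃ (hc : ∀ x ∈ k, ∀ r : R, x * r = r * x) (hle : k ≤ T),
    letI : CommRing k := commRingOfCentral R k hc
    letI : Algebra k T := RingHom.toAlgebra' (Subring.inclusion hle)
      (fun c x => Subtype.ext (hc c.1 c.2 x.1))
    IsSepExt k T

/-- if `S` is a subring of `R` containing a central subring `k`
(`k = C(R)^β`) and `S` is separable over `k`, then the subring `S·C(R)`
generated by `S` and the center `C(R)` is separable over `C(R)`. -/
theorem sup_center_sepOver_center
    (R : Type) [Ring R] (k S : Subring R)
    (hk : k ≤ Subring.center R) (hle : k ≤ S)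
    (hsep : SepOver R k S) :
    SepOver R (Subring.center R) (S ⊔ Subring.center R) := by
  obtain ⟨hc, hle', hz⟩ := hsep
  letI : CommRing k := commRingOfCentral R k hc
  letI : Algebra k S := RingHom.toAlgebra' (Subring.inclusion hle')
    (fun c x => Subtype.ext (hc c.1 c.2 x.1))
  obtain ⟨z, hz1, hz2⟩ := hz
  have hcC : ∀ x ∈ Subring.center R, ∀ r : R, x * r = r * x :=
    fun x hx r => ((Subring.mem_center_iff.mp hx) r).symm
  refine ⟨hcC, le_sup_right, ?_⟩
  letI : CommRing (Subring.center R) := commRingOfCentral R _ hcC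
  letI : Algebra (Subring.center R) ↥(S ⊔ Subring.center R) :=
    RingHom.toAlgebra' (Subring.inclusion le_sup_right)
      (fun c x => Subtype.ext (hcC c.1 c.2 x.1))
  let ι : S →+* ↥(S ⊔ Subring.center R) := Subring.inclusion le_sup_left
  -- the additive lift φ : S ⊗[k] S →+ T ⊗[Subring.center R] T
  let f : S →+ S →+ (↥(S ⊔ Subring.center R) ⊗[Subring.center R] ↥(S ⊔ Subring.center R)) :=
    { toFun := fun x =>
        { toFun := fun y => (ι x) ⊗ₜ[Subring.center R] (ι y)
          map_zero' := by simp
          map_add' := fun a b => by simp [map_add, tmul_add] }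
      map_zero' := by ext y; simp
      map_add' := fun a b => by ext y; simp [map_add, add_tmul] }
  have hf : ∀ (c : k) (x y : S), f (c • x) y = f x (c • y) := by
    intro c x y
    have h1 : ι (c • x) = (⟨c.1, hk c.2⟩ : Subring.center R) • ι x := rfl
    have h2 : ι (c • y) = (⟨c.1, hk c.2⟩ : Subring.center R) • ι y := rfl
    show ι (c • x) ⊗ₜ[Subring.center R] ι y = ι x ⊗ₜ[Subring.center R] ι (c • y)
    rw [h1, h2, smul_tmul]
  let φ : (S ⊗[k] S) →+ (↥(S ⊔ Subring.center R) ⊗[Subring.center R] ↥(S ⊔ Subring.center R)) := TensorProduct.liftAddHom f hf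
  have hφtmul : ∀ x y : S, φ (x ⊗ₜ[k] y) = (ι x) ⊗ₜ[Subring.center R] (ι y) := fun x y => rfl
  -- μ ∘ φ = ι ∘ μ
  have hμ : ∀ w : S ⊗[k] S, LinearMap.mul' (Subring.center R) ↥(S ⊔ Subring.center R) (φ w) = ι (LinearMap.mul' k S w) := by
    intro w
    induction w using TensorProduct.induction_on with
    | zero => simp
    | tmul x y => simp [hφtmul, LinearMap.mul'_apply]
    | add u v hu hv => simp [map_add, hu, hv]
  -- φ respects left multiplication by s ⊗ 1
  have hleft : ∀ (s : S) (w : S ⊗[k] S),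
      φ ((s ⊗ₜ[k] (1 : S)) * w) = ((ι s) ⊗ₜ[Subring.center R] (1 : ↥(S ⊔ Subring.center R))) * φ w := by
    intro s w
    induction w using TensorProduct.induction_on with
    | zero => simp
    | tmul x y =>
        simp only [Algebra.TensorProduct.tmul_mul_tmul, hφtmul, one_mul, map_mul, map_one]
    | add u v hu hv => simp only [mul_add, map_add, hu, hv]
  have hright : ∀ (s : S) (w : S ⊗[k] S),
      φ (w * ((1 : S) ⊗ₜ[k] s)) = φ w * ((1 : ↥(S ⊔ Subring.center R)) ⊗ₜ[Subring.center R] (ι s)) := by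
    intro s w
    induction w using TensorProduct.induction_on with
    | zero => simp
    | tmul x y =>
        simp only [Algebra.TensorProduct.tmul_mul_tmul, hφtmul, mul_one, map_mul, map_one]
    | add u v hu hv => simp only [add_mul, map_add, hu, hv]
  -- central elements: a ⊗ 1 and 1 ⊗ a act as scalar
  have hcentL : ∀ (c' : Subring.center R) (w : ↥(S ⊔ Subring.center R) ⊗[Subring.center R] ↥(S ⊔ Subring.center R)),
      ((Subring.inclusion le_sup_right c' : ↥(S ⊔ Subring.center R)) ⊗ₜ[Subring.center R] (1 : ↥(S ⊔ Subring.center R))) * w = c' • w := by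
    intro c' w
    induction w using TensorProduct.induction_on with
    | zero => simp
    | tmul x y =>
        rw [Algebra.TensorProduct.tmul_mul_tmul, one_mul, smul_tmul']
        rfl
    | add u v hu hv => simp [mul_add, hu, hv]
  have hcentR : ∀ (c' : Subring.center R) (w : ↥(S ⊔ Subring.center R) ⊗[Subring.center R] ↥(S ⊔ Subring.center R)),
      w * ((1 : ↥(S ⊔ Subring.center R)) ⊗ₜ[Subring.center R] (Subring.inclusion le_sup_right c' : ↥(S ⊔ Subring.center R))) = c' • w := by
    intro c' w
    induction w using TensorProduct.induction_on with
    | zero => simp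
    | tmul x y =>
        rw [Algebra.TensorProduct.tmul_mul_tmul, mul_one]
        have : y * (Subring.inclusion le_sup_right c' : ↥(S ⊔ Subring.center R))
            = (Subring.inclusion le_sup_right c' : ↥(S ⊔ Subring.center R)) * y :=
          Subtype.ext (hcC c'.1 c'.2 y.1).symm
        rw [this]
        exact TensorProduct.tmul_smul c' x y
    | add u v hu hv => simp [add_mul, hu, hv]
  refine ⟨φ z, ?_, ?_⟩
  · rw [hμ, hz1, map_one]
  · -- the set of elements commuting with φ z is a subring of T
    let K : Subring ↥(S ⊔ Subring.center R) :=
      { carrier := { a : ↥(S ⊔ Subring.center R) | (a ⊗ₜ[Subring.center R] (1 : ↥(S ⊔ Subring.center R))) * φ z = φ z * ((1 : ↥(S ⊔ Subring.center R)) ⊗ₜ[Subring.center R] a) }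
        one_mem' := by
          show ((1 : ↥(S ⊔ Subring.center R)) ⊗ₜ[Subring.center R] (1 : ↥(S ⊔ Subring.center R))) * φ z = φ z * ((1 : ↥(S ⊔ Subring.center R)) ⊗ₜ[Subring.center R] (1 : ↥(S ⊔ Subring.center R)))
          rw [← Algebra.TensorProduct.one_def, one_mul, mul_one]
        mul_mem' := by
          intro a b ha hb
          show ((a * b) ⊗ₜ[Subring.center R] (1 : ↥(S ⊔ Subring.center R))) * φ z = φ z * ((1 : ↥(S ⊔ Subring.center R)) ⊗ₜ[Subring.center R] (a * b))
          have h1 : ((a * b) ⊗ₜ[Subring.center R] (1 : ↥(S ⊔ Subring.center R))) = (a ⊗ₜ[Subring.center R] (1 : ↥(S ⊔ Subring.center R))) * (b ⊗ₜ[Subring.center R] (1 : ↥(S ⊔ Subring.center R))) := by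
            rw [Algebra.TensorProduct.tmul_mul_tmul, one_mul]
          have h2 : ((1 : ↥(S ⊔ Subring.center R)) ⊗ₜ[Subring.center R] (a * b)) = ((1 : ↥(S ⊔ Subring.center R)) ⊗ₜ[Subring.center R] a) * ((1 : ↥(S ⊔ Subring.center R)) ⊗ₜ[Subring.center R] b) := by
            rw [Algebra.TensorProduct.tmul_mul_tmul, one_mul]
          rw [h1, h2, mul_assoc, hb, ← mul_assoc, ha, mul_assoc]
        zero_mem' := by
          show ((0 : ↥(S ⊔ Subring.center R)) ⊗ₜ[Subring.center R] (1 : ↥(S ⊔ Subring.center R))) * φ z = φ z * ((1 : ↥(S ⊔ Subring.center R)) ⊗ₜ[Subring.center R] (0 : ↥(S ⊔ Subring.center R)))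
          rw [zero_tmul, tmul_zero, zero_mul, mul_zero]
        add_mem' := by
          intro a b ha hb
          show (((a + b)) ⊗ₜ[Subring.center R] (1 : ↥(S ⊔ Subring.center R))) * φ z = φ z * ((1 : ↥(S ⊔ Subring.center R)) ⊗ₜ[Subring.center R] (a + b))
          rw [add_tmul, tmul_add, add_mul, mul_add, ha, hb]
        neg_mem' := by
          intro a ha
          show (((-a)) ⊗ₜ[Subring.center R] (1 : ↥(S ⊔ Subring.center R))) * φ z = φ z * ((1 : ↥(S ⊔ Subring.center R)) ⊗ₜ[Subring.center R] (-a))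
          rw [neg_tmul, tmul_neg, neg_mul, mul_neg, ha] }
    have hSK : ∀ s : S, ι s ∈ K := by
      intro s
      show ((ι s) ⊗ₜ[Subring.center R] (1 : ↥(S ⊔ Subring.center R))) * φ z = φ z * ((1 : ↥(S ⊔ Subring.center R)) ⊗ₜ[Subring.center R] (ι s))
      rw [← hleft, hz2 s, hright]
    have hCK : ∀ c' : Subring.center R, (Subring.inclusion le_sup_right c' : ↥(S ⊔ Subring.center R)) ∈ K := by
      intro c'
      show ((Subring.inclusion le_sup_right c' : ↥(S ⊔ Subring.center R)) ⊗ₜ[Subring.center R] (1 : ↥(S ⊔ Subring.center R))) * φ z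
          = φ z * ((1 : ↥(S ⊔ Subring.center R)) ⊗ₜ[Subring.center R] (Subring.inclusion le_sup_right c' : ↥(S ⊔ Subring.center R)))
      rw [hcentL, hcentR]
    have hall : ∀ a : ↥(S ⊔ Subring.center R), a ∈ K := by
      intro a
      have hmap : S ⊔ Subring.center R ≤ K.map (S ⊔ Subring.center R).subtype := by
        refine sup_le ?_ ?_
        · intro s hs
          exact ⟨ι ⟨s, hs⟩, hSK ⟨s, hs⟩, rfl⟩
        · intro c hcmem
          exact ⟨Subring.inclusion le_sup_right ⟨c, hcmem⟩, hCK ⟨c, hcmem⟩, rfl⟩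
      obtain ⟨b, hbK, hb⟩ := hmap a.2
      have : a = b := Subtype.ext hb.symm
      rw [this]
      exact hbK
    intro a
    exact hall a
end

section
/- Let β be a unital action of a finite groupoid 𝒢 on a ring R such that R is a β-Galois extension of R^β. If g, h ∈ 𝒢 satisfy J_g = J_h ≠ {0}, then g = h. -/
open CategoryTheory TensorProduct

/-- A unital action `β = ({E_g}, {β_g})` of a finite groupoid `𝒢` (objects `Obj`,
morphisms `a ⟶ b`) on a ring `R` with `R = ⊕_{e ∈ 𝒢₀} E_e`.  The unital ideals
`E_e` are encoded by their central, pairwise-orthogonal identity elements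
`one e` summing to `1` (so `E_e = R·(one e)`), and `β_g : E_{g⁻¹} → E_g`
(for `g : a ⟶ b`, i.e. `d(g) = a`, `r(g) = b`) is encoded by the map
`act g : R → R`, `x ↦ β_g(x·1_{g⁻¹})`. -/
structure GpdAction (Obj : Type) [Groupoid Obj] [Fintype Obj] (R : Type) [Ring R] where
  one : Obj → R
  one_central : ∀ (e : Obj) (r : R), one e * r = r * one e
  one_idem : ∀ e : Obj, one e * one e = one e
  one_orth : ∀ e f : Obj, e ≠ f → one e * one f = 0
  sum_one : ∑ e : Obj, one e = 1
  act : ∀ {a b : Obj}, (a ⟶ b) → R → R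
  act_zero : ∀ {a b : Obj} (g : a ⟶ b), act g 0 = 0
  act_add : ∀ {a b : Obj} (g : a ⟶ b) (x y : R), act g (x + y) = act g x + act g y
  act_neg : ∀ {a b : Obj} (g : a ⟶ b) (x : R), act g (-x) = -act g x
  act_mul : ∀ {a b : Obj} (g : a ⟶ b) (x y : R), act g (x * y) = act g x * act g y
  act_proj : ∀ {a b : Obj} (g : a ⟶ b) (x : R), act g (x * one a) = act g x
  act_mem : ∀ {a b : Obj} (g : a ⟶ b) (x : R), act g x * one b = act g x
  act_one : ∀ {a b : Obj} (g : a ⟶ b), act g (one a) = one b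
  act_id : ∀ (e : Obj) (x : R), act (𝟙 e) x = x * one e
  act_comp : ∀ {a b c : Obj} (g : a ⟶ b) (h : b ⟶ c) (x : R),
    act (g ≫ h) x = act h (act g x)
  act_inv : ∀ {a b : Obj} (g : a ⟶ b) (x : R), act (Groupoid.inv g) (act g x) = x * one a

/-- The set of morphisms of the groupoid, as a single type. -/
abbrev Mor (Obj : Type) [Groupoid Obj] : Type := Σ a b : Obj, a ⟶ b

variable {Obj : Type} [Groupoid Obj] [Fintype Obj] {R : Type} [Ring R]

/-- The subring of invariants `{r ∈ R ∣ β_g(r·1_{g⁻¹}) = r·1_g}` under all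
morphisms `g` satisfying the predicate `P` (e.g. the morphisms of a
subgroupoid, or all morphisms of `𝒢`). -/
def GpdAction.invSubring (β : GpdAction Obj R)
    (P : ∀ ⦃a b : Obj⦄, (a ⟶ b) → Prop) : Subring R where
  carrier := {r : R | ∀ ⦃a b : Obj⦄ (g : a ⟶ b), P g → β.act g r = r * β.one b}
  zero_mem' := by intro a b g _; rw [β.act_zero, zero_mul]
  one_mem' := by
    intro a b g _
    have h1 : β.act g (1 : R) = β.act g (β.one a) := by
      rw [← β.act_proj g 1, one_mul]
    rw [h1, β.act_one, one_mul]
  add_mem' := by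
    intro x y hx hy a b g hg
    rw [β.act_add, hx g hg, hy g hg, add_mul]
  neg_mem' := by
    intro x hx a b g hg
    rw [β.act_neg, hx g hg, neg_mul]
  mul_mem' := by
    intro x y hx hy a b g hg
    rw [β.act_mul, hx g hg, hy g hg, mul_assoc, β.one_central b (y * β.one b),
      mul_assoc, β.one_idem, ← mul_assoc]

/-- The invariants `R^β` under the whole groupoid. -/
def GpdAction.inv (β : GpdAction Obj R) : Subring R :=
  β.invSubring fun _ _ _ => True

/-- The invariants `R^{β_ℋ}` under a subgroupoid `ℋ`. -/
def GpdAction.invH (β : GpdAction Obj R) (H : Subgroupoid Obj) : Subring R :=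
  β.invSubring fun _ _ g => g ∈ H.arrows _ _

/-- `C(R)^β = C(R) ∩ R^β`. -/
def GpdAction.centerInv (β : GpdAction Obj R) : Subring R :=
  Subring.center R ⊓ β.inv

/-- `R` is a `β`-Galois extension of `R^β`: there is a Galois coordinate system
`x_i, y_i` with `Σ_i x_i·β_g(y_i·1_{g⁻¹}) = Σ_{e ∈ 𝒢₀} δ_{e,g}·1_e` for all `g`. -/
def GpdAction.IsGaloisExt (β : GpdAction Obj R) : Prop :=
  ∃ (n : ℕ) (x y : Fin n → R),
    (∀ e : Obj, ∑ i, x i * β.act (𝟙 e) (y i * β.one e) = β.one e) ∧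
    (∀ (a b : Obj) (g : a ⟶ b), ¬(∃ _ : a = b, HEq g (𝟙 a)) →
      ∑ i, x i * β.act g (y i * β.one a) = 0)

/-- `J_g = {r ∈ E_g ∣ r·β_g(x·1_{g⁻¹}) = x·r for all x ∈ R}`, for a morphism
`m = (a, b, g)`. -/
def GpdAction.J (β : GpdAction Obj R) (m : Mor Obj) : Set R :=
  {r : R | r * β.one m.2.1 = r ∧ ∀ x : R, r * β.act m.2.2 (x * β.one m.1) = x * r}

/-- `S_ℋ = {h ∈ ℋ ∣ J_h ≠ {0}}`, as a set of morphisms. -/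
def GpdAction.SArr (β : GpdAction Obj R) (H : Subgroupoid Obj) : Set (Mor Obj) :=
  {m : Mor Obj | m.2.2 ∈ H.arrows m.1 m.2.1 ∧ β.J m ≠ {0}}


lemma GpdAction.act_sum (β : GpdAction Obj R) {a b : Obj} (g : a ⟶ b)
    {n : ℕ} (f : Fin n → R) : β.act g (∑ i, f i) = ∑ i, β.act g (f i) := by
  let φ : R →+ R := ⟨⟨β.act g, β.act_zero g⟩, β.act_add g⟩
  exact map_sum φ f Finset.univ

lemma GpdAction.sum_xy (β : GpdAction Obj R) {n : ℕ} (x y : Fin n → R)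
    (hx : ∀ e : Obj, ∑ i, x i * β.act (𝟙 e) (y i * β.one e) = β.one e) :
    ∑ i, x i * y i = 1 := by
  have h1 : ∀ e : Obj, ∑ i, x i * y i * β.one e = β.one e := by
    intro e
    have := hx e
    simp only [β.act_id, mul_assoc, β.one_idem] at this ⊢
    exact this
  calc ∑ i, x i * y i = (∑ i, x i * y i) * 1 := (mul_one _).symm
    _ = (∑ i, x i * y i) * ∑ e : Obj, β.one e := by rw [β.sum_one]
    _ = ∑ e : Obj, ∑ i, x i * y i * β.one e := by
        rw [Finset.mul_sum]; exact Finset.sum_congr rfl fun e _ => Finset.sum_mul ..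
    _ = ∑ e : Obj, β.one e := Finset.sum_congr rfl fun e _ => h1 e
    _ = 1 := β.sum_one

/-- in a `β`-Galois extension, if two morphisms `g, h` of `𝒢`
satisfy `J_g = J_h ≠ {0}`, then `g = h`. -/
theorem mor_eq_of_J_eq_of_ne_zero
    (β : GpdAction Obj R) (hGal : β.IsGaloisExt)
    (g h : Mor Obj) (hJ : β.J g = β.J h) (hne : β.J g ≠ {0}) :
    g = h := by
  obtain ⟨a, b, g'⟩ := g
  obtain ⟨c, d, h'⟩ := h
  -- find a nonzero element of J g
  have h0 : (0 : R) ∈ β.J ⟨a, b, g'⟩ :=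
    ⟨zero_mul _, fun x => by rw [zero_mul, mul_zero]⟩
  obtain ⟨r, hrJ, hr0⟩ : ∃ r ∈ β.J ⟨a, b, g'⟩, r ≠ 0 := by
    by_contra hc
    push_neg at hc
    apply hne
    ext s
    simp only [Set.mem_singleton_iff]
    exact ⟨fun hs => hc s hs, fun hs => hs ▸ h0⟩
  obtain ⟨hr1, hrg⟩ := hrJ
  have hrJh : r ∈ β.J ⟨c, d, h'⟩ := hJ ▸ ⟨hr1, hrg⟩
  obtain ⟨hr1', hrh⟩ := hrJh
  simp only at hr1 hrg hr1' hrh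
  -- b = d
  have hbd : b = d := by
    by_contra hbd
    apply hr0
    calc r = r * β.one d := hr1'.symm
      _ = r * β.one b * β.one d := by rw [hr1]
      _ = r * (β.one b * β.one d) := by rw [mul_assoc]
      _ = 0 := by rw [β.one_orth b d hbd, mul_zero]
  subst hbd
  -- a = c
  have hac : a = c := by
    by_contra hac
    apply hr0
    have h1 : β.one a * r = r := by
      have := hrg (β.one a)
      rw [β.one_idem, β.act_one] at this
      rw [← this, hr1]
    have h2 : β.one a * r = 0 := by
      have := hrh (β.one a)
      rw [β.one_orth a c hac, β.act_zero, mul_zero] at this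
      exact this.symm
    rw [← h1, h2]
  subst hac
  -- now g' h' : a ⟶ b; show g' = h'
  suffices hgh2 : g' = h' by rw [hgh2]
  by_contra hgh
  apply hr0
  obtain ⟨n, x, y, hid, hnid⟩ := hGal
  have hrg' : ∀ x : R, r * β.act g' x = x * r := fun x => by
    rw [← β.act_proj, hrg]
  -- the composite k = h' ≫ inv g' is not the identity
  set k : a ⟶ a := h' ≫ Groupoid.inv g' with hk
  have hknid : ¬(∃ _ : a = a, HEq k (𝟙 a)) := by
    rintro ⟨-, hkid⟩
    apply hgh
    have hkid' : k = 𝟙 a := eq_of_heq hkid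
    calc g' = 𝟙 a ≫ g' := (Category.id_comp g').symm
      _ = (h' ≫ Groupoid.inv g') ≫ g' := by rw [← hkid']
      _ = h' := by rw [Category.assoc, Groupoid.inv_comp, Category.comp_id]
  have hsum0 : ∑ i, x i * β.act k (y i * β.one a) = 0 := hnid a a k hknid
  have step : ∀ i, β.act g' (x i * β.act k (y i * β.one a))
      = β.act g' (x i) * β.act h' (y i * β.one a) := by
    intro i
    rw [β.act_mul, hk, β.act_comp, ← β.act_comp, Groupoid.inv_comp, β.act_id,
      β.act_mem]
  -- apply β.act g' to both sides
  have key : ∑ i, β.act g' (x i) * β.act h' (y i * β.one a) = 0 := by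
    have := congrArg (β.act g') hsum0
    rw [β.act_zero, β.act_sum] at this
    exact (Finset.sum_congr rfl fun i _ => (step i).symm).trans this
  -- multiply by r on the left
  have hmul := congrArg (r * ·) key
  simp only [mul_zero] at hmul
  rw [Finset.mul_sum] at hmul
  have heach : ∀ i, r * (β.act g' (x i) * β.act h' (y i * β.one a))
      = x i * y i * r := by
    intro i
    rw [← mul_assoc, hrg' (x i), mul_assoc, hrh (y i), ← mul_assoc]
  rw [Finset.sum_congr rfl (fun i _ => heach i), ← Finset.sum_mul,
    β.sum_xy x y hid, one_mul] at hmul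
  exact hmul
end

section
/- Let β be a unital action of a finite groupoid 𝒢 on a ring R such that R is a β-Galois extension of R^β, and let S_𝒢 = {g ∈ 𝒢 ∣ J_g ≠ {0}}. Then the map S ↦ ⊕_{g ∈ S} J_g, defined on subsets S ⊆ S_𝒢, is injective. -/
open CategoryTheory TensorProduct

variable {Obj : Type} [Groupoid Obj] [Fintype Obj] {R : Type} [Ring R]

/-- The internal direct sum `⊕_{g ∈ S} J_g`, as a subset of `R`: the set of
sums of families supported on `S` with `g`-component in `J_g`. -/
def GpdAction.Jsum [∀ a b : Obj, Fintype (a ⟶ b)]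
    (β : GpdAction Obj R) (S : Set (Mor Obj)) : Set R :=
  {r : R | ∃ j : Mor Obj → R, (∀ m, j m ∈ β.J m) ∧ (∀ m ∉ S, j m = 0) ∧
    r = ∑ m : Mor Obj, j m}

/-- `0` belongs to every `J_m`. -/
lemma GpdAction.J_zero (β : GpdAction Obj R) (m : Mor Obj) : (0 : R) ∈ β.J m := by
  refine ⟨by rw [zero_mul], fun x => by rw [zero_mul, mul_zero]⟩

/-- An element of `J_h` is fixed by left multiplication by `one h.1`. -/
lemma GpdAction.J_one_dom (β : GpdAction Obj R) {m : Mor Obj} {r : R} (hr : r ∈ β.J m) :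
    β.one m.1 * r = r := by
  have h := hr.2 (β.one m.1)
  rw [β.one_idem, β.act_one, hr.1] at h
  exact h.symm

/-- If the codomain of `h` differs from `b`, elements of `J_h` annihilate the
image of `act g` for `g : a ⟶ b`. -/
lemma GpdAction.J_cross (β : GpdAction Obj R) {m : Mor Obj} {r : R} (hr : r ∈ β.J m)
    {a b : Obj} (g : a ⟶ b) (hb : m.2.1 ≠ b) (w : R) :
    r * β.act g w = 0 := by
  calc r * β.act g w = r * β.one m.2.1 * (β.act g w * β.one b) := by rw [hr.1, β.act_mem]
    _ = r * (β.one m.2.1 * β.act g w) * β.one b := by rw [mul_assoc, mul_assoc, mul_assoc]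
    _ = r * (β.act g w * β.one m.2.1) * β.one b := by rw [β.one_central]
    _ = r * β.act g w * (β.one m.2.1 * β.one b) := by rw [mul_assoc, mul_assoc, mul_assoc]
    _ = 0 := by rw [β.one_orth _ _ hb, mul_zero]

open Classical in
/-- The key orthogonality computation coming from the Galois coordinates. -/
lemma GpdAction.key (β : GpdAction Obj R) {n : ℕ} {x y : Fin n → R}
    (hG1 : ∀ e : Obj, ∑ i, x i * β.act (𝟙 e) (y i * β.one e) = β.one e)
    (hG2 : ∀ (a b : Obj) (g : a ⟶ b), ¬(∃ _ : a = b, HEq g (𝟙 a)) →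
      ∑ i, x i * β.act g (y i * β.one a) = 0)
    (m h : Mor Obj) {r : R} (hr : r ∈ β.J h) :
    ∑ i, x i * r * β.act m.2.2 (y i * β.one m.1) = if h = m then r else 0 := by
  obtain ⟨a, b, g⟩ := m
  obtain ⟨c, d, hh⟩ := h
  by_cases hdb : d = b
  · subst hdb
    set k : a ⟶ c := g ≫ Groupoid.inv hh with hkdef
    have hg : k ≫ hh = g := by
      rw [hkdef, Category.assoc, Groupoid.inv_comp, Category.comp_id]
    have step : ∀ i, r * β.act g (y i * β.one a) = β.act k (y i * β.one a) * r := by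
      intro i
      have h1 : β.act g (y i * β.one a) = β.act hh (β.act k (y i * β.one a)) := by
        rw [← hg, β.act_comp]
      have h2 : β.act k (y i * β.one a) * β.one c = β.act k (y i * β.one a) :=
        β.act_mem k _
      calc r * β.act g (y i * β.one a)
          = r * β.act hh (β.act k (y i * β.one a) * β.one c) := by rw [h1, h2]
        _ = β.act k (y i * β.one a) * r := hr.2 _
    have hsum : ∑ i, x i * r * β.act g (y i * β.one a)
        = (∑ i, x i * β.act k (y i * β.one a)) * r := by
      rw [Finset.sum_mul]
      refine Finset.sum_congr rfl fun i _ => ?_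
      rw [mul_assoc, step i, ← mul_assoc]
    rw [hsum]
    by_cases hkid : ∃ _ : a = c, HEq k (𝟙 a)
    · obtain ⟨rfl, hk2⟩ := hkid
      have hk3 : k = 𝟙 a := eq_of_heq hk2
      have hgh : g = hh := by rw [← hg, hk3, Category.id_comp]
      subst hgh
      rw [if_pos rfl, hk3, hG1 a]
      exact β.J_one_dom hr
    · have hne : (⟨c, d, hh⟩ : Mor Obj) ≠ ⟨a, d, g⟩ := by
        intro he
        have hca : c = a := congrArg Sigma.fst he
        subst hca
        have h2 := eq_of_heq (Sigma.mk.inj_iff.mp he).2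
        have h3 : hh = g := eq_of_heq (Sigma.mk.inj_iff.mp h2).2
        subst h3
        exact hkid ⟨rfl, heq_of_eq (by rw [hkdef, Groupoid.comp_inv])⟩
      rw [if_neg hne, hG2 a c k hkid, zero_mul]
  · have hne : (⟨c, d, hh⟩ : Mor Obj) ≠ ⟨a, b, g⟩ := by
      intro he
      exact hdb (congrArg (fun m : Mor Obj => m.2.1) he)
    rw [if_neg hne]
    refine Finset.sum_eq_zero fun i _ => ?_
    rw [mul_assoc, β.J_cross hr g hdb, mul_zero]

open Classical in
/-- One inclusion of the main theorem. -/
lemma GpdAction.Jsum_subset [∀ a b : Obj, Fintype (a ⟶ b)]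
    (β : GpdAction Obj R) (hGal : β.IsGaloisExt)
    {S S' : Set (Mor Obj)}
    (hS : S ⊆ {m : Mor Obj | β.J m ≠ {0}})
    (hss : β.Jsum S ⊆ β.Jsum S') : S ⊆ S' := by
  obtain ⟨n, x, y, hG1, hG2⟩ := hGal
  intro m hm
  -- get a nonzero element of J m
  obtain ⟨r, hrJ, hr0⟩ : ∃ r ∈ β.J m, r ≠ 0 := by
    by_contra hcon
    push_neg at hcon
    refine hS hm (Set.eq_singleton_iff_unique_mem.mpr ⟨β.J_zero m, fun r hr => hcon r hr⟩)
  -- r is in Jsum S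
  have hrS : r ∈ β.Jsum S := by
    refine ⟨fun m' => if m' = m then r else 0, ?_, ?_, ?_⟩
    · intro m'
      by_cases hcase : m' = m
      · simpa [hcase] using hrJ
      · simpa [hcase] using β.J_zero m'
    · intro m' hm'
      exact if_neg fun (hc : m' = m) => hm' (hc ▸ hm)
    · rw [Finset.sum_ite_eq' Finset.univ m fun _ => r, if_pos (Finset.mem_univ m)]
  obtain ⟨j, hjJ, hjsupp, hjsum⟩ := hss hrS
  by_contra hmS'
  -- apply the projector F_m to both sides
  have hFr : ∑ i, x i * r * β.act m.2.2 (y i * β.one m.1) = r := by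
    rw [β.key hG1 hG2 m m hrJ, if_pos rfl]
  have hFsum : ∑ i, x i * r * β.act m.2.2 (y i * β.one m.1)
      = ∑ m' : Mor Obj, ∑ i, x i * j m' * β.act m.2.2 (y i * β.one m.1) := by
    rw [Finset.sum_comm]
    refine Finset.sum_congr rfl fun i _ => ?_
    rw [hjsum, Finset.mul_sum, Finset.sum_mul]
  have hz : ∑ m' : Mor Obj, ∑ i, x i * j m' * β.act m.2.2 (y i * β.one m.1) = 0 := by
    have he : ∀ m' : Mor Obj, ∑ i, x i * j m' * β.act m.2.2 (y i * β.one m.1)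
        = if m' = m then j m' else 0 := fun m' => β.key hG1 hG2 m m' (hjJ m')
    rw [Finset.sum_congr rfl fun m' _ => he m',
      Finset.sum_ite_eq' Finset.univ m j, if_pos (Finset.mem_univ m),
      hjsupp m hmS']
  exact hr0 (by rw [← hFr, hFsum, hz])

/-- in a `β`-Galois extension, the map `S ↦ ⊕_{g ∈ S} J_g` is
injective on subsets `S` of `S_𝒢 = {g ∈ 𝒢 ∣ J_g ≠ {0}}`. -/
theorem Jsum_injective
    [∀ a b : Obj, Fintype (a ⟶ b)]
    (β : GpdAction Obj R) (hGal : β.IsGaloisExt)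
    (S S' : Set (Mor Obj))
    (hS : S ⊆ {m : Mor Obj | β.J m ≠ {0}})
    (hS' : S' ⊆ {m : Mor Obj | β.J m ≠ {0}})
    (h : β.Jsum S = β.Jsum S') :
    S = S' := by
  exact Set.Subset.antisymm
    (β.Jsum_subset hGal hS (h ▸ Set.Subset.refl _))
    (β.Jsum_subset hGal hS' (h ▸ Set.Subset.refl _))
end
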